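/- arXiv:1706.06469 — 4 statements merged into one kernel-verified Lean document; each statement's English description precedes it below -/
import Mathlib

section
/- Let H be a B×B orthogonal projection matrix with diagonal entries h_{ii}, and suppose h_{ii} < 1 for all i. Let Σ be a diagonal matrix with constant diagonal ν ≥ 0, and let Ψ̃ be the diagonal matrix with entries 1/(1 − h_{ii}). Then tr(Σ(I − H)Ψ̃(I − H)) = Bν. -/
open Matrix BigOperators

/-! Both factors `1 - H` are the same projection, so by cyclicity of the trace they collapse into one
and the trace becomes `ν ∑ᵢ (1 - hᵢᵢ)⁻¹ (1 - hᵢᵢ) = ν B`. -/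

namespace Matrix

variable {n R : Type*} [Fintype n] [DecidableEq n]

theorem trace_mul_diagonal_mul_of_isIdempotentElem [CommSemiring R] {P : Matrix n n R}
    (hP : IsIdempotentElem P) (d : n → R) :
    (P * diagonal d * P).trace = ∑ i, P i i * d i := by
  rw [trace_mul_cycle, hP.eq]
  simp only [trace, diag_apply, mul_diagonal]

theorem trace_mul_diagonal_inv_diag_mul_of_isIdempotentElem [Field R] {P : Matrix n n R}
    (hP : IsIdempotentElem P) (hdiag : ∀ i, P i i ≠ 0) :
    (P * diagonal (fun i => (P i i)⁻¹) * P).trace = Fintype.card n := by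
  rw [trace_mul_diagonal_mul_of_isIdempotentElem hP]
  simp [mul_inv_cancel₀ (hdiag _)]

end Matrix

theorem trace_HC2_identity_general {B : ℕ} (H : Matrix (Fin B) (Fin B) ℝ)
    (hidem : H * H = H) (hdiag : ∀ i, H i i < 1)
    (ν : ℝ)
    (Sig Ψt : Matrix (Fin B) (Fin B) ℝ)
    (hSig : Sig = ν • (1 : Matrix (Fin B) (Fin B) ℝ))
    (hΨ : Ψt = Matrix.diagonal (fun i => (1 - H i i)⁻¹)) :
    (Sig * (1 - H) * Ψt * (1 - H)).trace = (B : ℝ) * ν := by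
  have hproj : IsIdempotentElem (1 - H) := IsIdempotentElem.one_sub hidem
  have hdiag' : ∀ i, (1 - H) i i = 1 - H i i := fun i => by
    rw [Matrix.sub_apply, one_apply_eq]
  have hne : ∀ i, (1 - H) i i ≠ 0 := fun i => by
    rw [hdiag']
    linarith [hdiag i]
  subst hSig hΨ
  calc (ν • 1 * (1 - H) * diagonal (fun i => (1 - H i i)⁻¹) * (1 - H)).trace
      = ν * ((1 - H) * diagonal (fun i => ((1 - H) i i)⁻¹) * (1 - H)).trace := by
        simp only [hdiag', smul_mul, one_mul, trace_smul, smul_eq_mul]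
    _ = B * ν := by
        rw [trace_mul_diagonal_inv_diag_mul_of_isIdempotentElem hproj hne, Fintype.card_fin,
          mul_comm]

/-- If H is a B×B orthogonal projection with h_{ii} < 1 for all i,
Σ = ν•I with ν ≥ 0, and Ψ̃ = diag(1/(1−h_{ii})), then tr(Σ(I−H)Ψ̃(I−H)) = Bν. -/
theorem trace_HC2_identity {B : ℕ} (H : Matrix (Fin B) (Fin B) ℝ)
    (hsym : H.IsSymm) (hidem : H * H = H) (hdiag : ∀ i, H i i < 1)
    (ν : ℝ) (hν : 0 ≤ ν)
    (Sig Ψt : Matrix (Fin B) (Fin B) ℝ)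
    (hSig : Sig = ν • (1 : Matrix (Fin B) (Fin B) ℝ))
    (hΨ : Ψt = Matrix.diagonal (fun i => (1 - H i i)⁻¹)) :
    (Sig * (1 - H) * Ψt * (1 - H)).trace = (B : ℝ) * ν :=
  trace_HC2_identity_general H hidem hdiag ν Sig Ψt hSig hΨ
end

section
/- In a paired randomized experiment with B pairs (n_i = 2, n_{1i} = n_{0i} = 1 for all i), let τ̂_i be the observed treated-minus-control difference in pair i, Δ̂ = B⁻¹ ∑ τ̂_i, and S²_P = (B(B−1))⁻¹ ∑_i (τ̂_i − Δ̂)². Then E[S²_P] − Var(Δ̂) = (B(B−1))⁻¹ ∑_i (τ̄_i − Δ̄)², where τ̄_i is the average treatment effect in pair i and Δ̄ = B⁻¹ ∑ τ̄_i. In particular S²_P is unbiased for Var(Δ̂) if and only if the pair-level average treatment effects τ̄_i are all equal. -/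
/-!
Write `d i` for half the difference between the two effects pair `i` can show. The observed
effect is then `τhat i = τbar i + ε i * d i` with independent uniform signs `ε i = ±1`, and
averaging over the signs kills every term linear in some `ε i` and turns `ε i * ε j` into
`[i = j]`. Hence `Var(Δhat) = ∑ d i ^ 2 / B ^ 2`, while, by
`∑ (y i - ȳ) ^ 2 = ∑ y i ^ 2 - (∑ y i) ^ 2 / B`,
`B (B - 1) E[S2P] = ∑ (τbar i - Δbar) ^ 2 + (1 - 1 / B) ∑ d i ^ 2`;
the `d`-terms cancel in the difference.
-/

open Finset

namespace PairedExperiment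

variable {ι : Type*} [Fintype ι]

lemma sum_sq_sub_mean (y : ι → ℝ) :
    ∑ i, (y i - (∑ j, y j) / Fintype.card ι) ^ 2
      = ∑ i, y i ^ 2 - (∑ i, y i) ^ 2 / Fintype.card ι := by
  rcases isEmpty_or_nonempty ι with hι | hι
  · simp
  have hn : (Fintype.card ι : ℝ) ≠ 0 := by positivity
  simp only [sub_sq, sum_add_distrib, sum_sub_distrib, sum_const, card_univ, ← sum_mul,
    nsmul_eq_mul, ← mul_sum]
  field_simp
  ring

lemma sum_sq_sub_mean_eq_zero_iff (f : ι → ℝ) :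
    ∑ i, (f i - (∑ j, f j) / Fintype.card ι) ^ 2 = 0 ↔ ∀ i j, f i = f j := by
  rw [sum_eq_zero_iff_of_nonneg fun i _ => sq_nonneg _]
  simp only [mem_univ, true_implies, sq_eq_zero_iff, sub_eq_zero]
  constructor
  · intro h i j
    rw [h i, h j]
  · intro h i
    have hn : (Fintype.card ι : ℝ) ≠ 0 := by
      have : Nonempty ι := ⟨i⟩
      positivity
    rw [sum_congr rfl fun j _ => h j i, sum_const, card_univ, nsmul_eq_mul]
    field_simp

lemma sum_sq_const_add (c : ℝ) (f : ι → ℝ) (hf : ∑ x, f x = 0) :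
    ∑ x, (c + f x) ^ 2 = Fintype.card ι * c ^ 2 + ∑ x, f x ^ 2 := by
  simp only [add_sq, sum_add_distrib, sum_const, card_univ, nsmul_eq_mul, ← mul_sum, hf]
  ring

def boolSign (b : Bool) : ℝ := if b then 1 else -1

@[simp] lemma boolSign_not (b : Bool) : boolSign (!b) = -boolSign b := by
  cases b <;> simp [boolSign]

@[simp] lemma boolSign_sq (b : Bool) : boolSign b ^ 2 = 1 := by
  cases b <;> simp [boolSign]

variable [DecidableEq ι]

lemma sum_boolSign_mul_eq_zero (i : ι) (g : (ι → Bool) → ℝ)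
    (hg : ∀ z b, g (Function.update z i b) = g z) :
    ∑ z : ι → Bool, boolSign (z i) * g z = 0 := by
  -- flipping coordinate `i` is a bijection of the cube that negates the summand
  have hflip : Function.Involutive fun z : ι → Bool => Function.update z i (!z i) :=
    fun z => by simp
  have := hflip.bijective.sum_comp fun z => boolSign (z i) * g z
  simp only [Function.update_self, boolSign_not, hg, neg_mul, sum_neg_distrib] at this
  linarith

lemma sum_boolSign (i : ι) : ∑ z : ι → Bool, boolSign (z i) = 0 := by
  simpa using sum_boolSign_mul_eq_zero i (fun _ => 1) fun _ _ => rfl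

lemma sum_boolSign_mul_boolSign (i j : ι) :
    ∑ z : ι → Bool, boolSign (z i) * boolSign (z j)
      = if i = j then 2 ^ Fintype.card ι else 0 := by
  split_ifs with hij
  · subst hij
    simp [← sq]
  · exact sum_boolSign_mul_eq_zero i _ fun z b => by rw [Function.update_of_ne (Ne.symm hij)]

lemma sum_sum_boolSign_mul (d : ι → ℝ) : ∑ z : ι → Bool, ∑ i, boolSign (z i) * d i = 0 := by
  rw [sum_comm]
  exact sum_eq_zero fun i _ => by rw [← sum_mul, sum_boolSign, zero_mul]

lemma sum_sq_sum_boolSign_mul (d : ι → ℝ) :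
    ∑ z : ι → Bool, (∑ i, boolSign (z i) * d i) ^ 2 = 2 ^ Fintype.card ι * ∑ i, d i ^ 2 := by
  calc ∑ z : ι → Bool, (∑ i, boolSign (z i) * d i) ^ 2
      = ∑ i, ∑ j, d i * d j * ∑ z : ι → Bool, boolSign (z i) * boolSign (z j) := by
        simp_rw [sq, sum_mul_sum, mul_sum]
        rw [sum_comm]
        refine sum_congr rfl fun i _ => ?_
        rw [sum_comm]
        exact sum_congr rfl fun j _ => sum_congr rfl fun z _ => by ring
    _ = 2 ^ Fintype.card ι * ∑ i, d i ^ 2 := by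
        simp [sum_boolSign_mul_boolSign, mul_sum, sq, mul_comm]

lemma sum_sq_sub_mean_boolSign_effects (t d : ι → ℝ) :
    ∑ z : ι → Bool, ∑ i, (t i + boolSign (z i) * d i
        - (∑ j, (t j + boolSign (z j) * d j)) / Fintype.card ι) ^ 2
      = 2 ^ Fintype.card ι * (∑ i, (t i - (∑ j, t j) / Fintype.card ι) ^ 2
        + (1 - 1 / Fintype.card ι) * ∑ i, d i ^ 2) := by
  have hsq : ∀ i, ∑ z : ι → Bool, (t i + boolSign (z i) * d i) ^ 2
      = 2 ^ Fintype.card ι * (t i ^ 2 + d i ^ 2) := fun i => by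
    rw [sum_sq_const_add _ _ (by rw [← sum_mul, sum_boolSign, zero_mul])]
    simp only [Fintype.card_pi, Fintype.card_bool, prod_const, card_univ, Nat.cast_pow,
      Nat.cast_ofNat, mul_pow, boolSign_sq, one_mul, sum_const, nsmul_eq_mul]
    ring
  have hsum_sq : ∑ z : ι → Bool, (∑ i, (t i + boolSign (z i) * d i)) ^ 2
      = 2 ^ Fintype.card ι * ((∑ i, t i) ^ 2 + ∑ i, d i ^ 2) := by
    simp only [sum_add_distrib]
    rw [sum_sq_const_add _ _ (sum_sum_boolSign_mul d), sum_sq_sum_boolSign_mul]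
    simp only [Fintype.card_pi, Fintype.card_bool, prod_const, card_univ, Nat.cast_pow,
      Nat.cast_ofNat]
    ring
  simp only [sum_sq_sub_mean]
  rw [sum_sub_distrib, sum_comm, ← sum_div, hsum_sq, sum_congr rfl fun i _ => hsq i,
    ← mul_sum, sum_add_distrib]
  ring

lemma sum_sq_mean_sub_mean_boolSign_effects (t d : ι → ℝ) :
    ∑ z : ι → Bool, ((∑ i, (t i + boolSign (z i) * d i)) / Fintype.card ι
        - (∑ i, t i) / Fintype.card ι) ^ 2
      = 2 ^ Fintype.card ι * (∑ i, d i ^ 2) / Fintype.card ι ^ 2 := by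
  simp only [sum_add_distrib, add_sub_cancel_left, ← sub_div, div_pow]
  rw [← sum_div, sum_sq_sum_boolSign_mul]

end PairedExperiment

open PairedExperiment

/-- In a paired experiment with B pairs, with one of the two units of each
pair treated uniformly at random (independently across pairs),
E[S²_P] − Var(Δ̂) = (B(B−1))⁻¹ ∑ (τ̄_i − Δ̄)², and S²_P is unbiased for Var(Δ̂) iff all
pair-level average treatment effects τ̄_i are equal. Here expectations are uniform
averages over the 2^B equiprobable assignments z : Fin B → Bool, where z i = true means
unit 0 of pair i is treated. -/
theorem paired_variance_bias {B : ℕ} (hB : 2 ≤ B)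
    (r1 r0 : Fin B → Fin 2 → ℝ)
    (τhat : Fin B → (Fin B → Bool) → ℝ)
    (hτhat : τhat = fun i z => if z i then r1 i 0 - r0 i 1 else r1 i 1 - r0 i 0)
    (τbar : Fin B → ℝ)
    (hτbar : τbar = fun i => ((r1 i 0 - r0 i 0) + (r1 i 1 - r0 i 1)) / 2)
    (Δhat : (Fin B → Bool) → ℝ) (hΔhat : Δhat = fun z => (∑ i, τhat i z) / B)
    (Δbar : ℝ) (hΔbar : Δbar = (∑ i, τbar i) / B)
    (S2P : (Fin B → Bool) → ℝ)
    (hS2P : S2P = fun z => (∑ i, (τhat i z - Δhat z) ^ 2) / ((B : ℝ) * ((B : ℝ) - 1)))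
    (ES2P VarΔ : ℝ)
    (hE : ES2P = (∑ z : Fin B → Bool, S2P z) / 2 ^ B)
    (hV : VarΔ = (∑ z : Fin B → Bool, (Δhat z - Δbar) ^ 2) / 2 ^ B) :
    ES2P - VarΔ = (∑ i, (τbar i - Δbar) ^ 2) / ((B : ℝ) * ((B : ℝ) - 1)) ∧
      (ES2P = VarΔ ↔ ∀ i j, τbar i = τbar j) := by
  set d : Fin B → ℝ := fun i => ((r1 i 0 - r0 i 1) - (r1 i 1 - r0 i 0)) / 2
  have hτ : τhat = fun i z => τbar i + boolSign (z i) * d i := by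
    subst hτhat hτbar
    funext i z
    cases z i <;> simp only [boolSign, d, Bool.false_eq_true, if_true, if_false] <;> ring
  have hBR : (2 : ℝ) ≤ B := by exact_mod_cast hB
  have hB0 : (B : ℝ) ≠ 0 := by linarith
  have hB1 : (B : ℝ) - 1 ≠ 0 := by linarith
  have h2B : (2 : ℝ) ^ B ≠ 0 := by positivity
  set Sc := ∑ i, (τbar i - Δbar) ^ 2 with hSc
  set Sd := ∑ i, d i ^ 2
  have hES : ES2P = (Sc + (1 - 1 / B) * Sd) / ((B : ℝ) * ((B : ℝ) - 1)) := by
    have := sum_sq_sub_mean_boolSign_effects τbar d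
    rw [Fintype.card_fin, ← hΔbar] at this
    rw [hE, hS2P, hΔhat, hτ, ← sum_div, this, mul_div_assoc, mul_div_cancel_left₀ _ h2B]
  have hVar : VarΔ = Sd / B ^ 2 := by
    have := sum_sq_mean_sub_mean_boolSign_effects τbar d
    rw [Fintype.card_fin, ← hΔbar] at this
    rw [hV, hΔhat, hτ, this, mul_div_assoc, mul_div_cancel_left₀ _ h2B]
  have hbias : ES2P - VarΔ = Sc / ((B : ℝ) * ((B : ℝ) - 1)) := by
    rw [hES, hVar]
    field_simp
    ring
  refine ⟨hbias, ?_⟩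
  rw [← sub_eq_zero, hbias, div_eq_zero_iff, or_iff_left (mul_ne_zero hB0 hB1), hSc, hΔbar]
  simpa using sum_sq_sub_mean_eq_zero_iff τbar
end

section
/- Let τ̂₁,…,τ̂_B be independent random variables with E[τ̂_i] = τ̄_i and Var(τ̂_i) = v_i. Let Q be a fixed B×L matrix of full column rank with hat matrix H = H_Q, diagonal entries h_{ii} < 1, and Ψ the diagonal matrix with entries 1/(1−h_{ii})². Let W be a fixed diagonal matrix. Then E[τ̂ᵀW(I−H)Ψ(I−H)Wτ̂] = ∑_i w_i² v_i (1 + ∑_{j≠i} h_{ij}²/(1−h_{jj})²) + τ̄ᵀW(I−H)Ψ(I−H)Wτ̄, and hence B² S²₂(Q) := τ̂ᵀW(I−H)Ψ(I−H)Wτ̂ satisfies E[B² S²₂(Q)] ≥ ∑_i w_i² v_i. -/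
/-!
Expanding the quadratic form, independence kills every cross moment, so
`E[τ̂ᵀ M τ̂] = ∑ᵢ Mᵢᵢ vᵢ + τ̄ᵀ M τ̄` for any fixed matrix `M`. For the HC3 matrix
`M = W(I−H)Ψ(I−H)W` the pivot term of `Mᵢᵢ` is `wᵢ²(1 − hᵢᵢ)²/(1 − hᵢᵢ)² = wᵢ²` and the other
terms are squares, so `Mᵢᵢ ≥ wᵢ²`; and `M = ((I−H)W)ᵀ Ψ ((I−H)W)` is positive semidefinite, so
the bias term `τ̄ᵀ M τ̄` is nonnegative.
-/

open Matrix MeasureTheory ProbabilityTheory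

section SecondMoments

variable {Ω ι : Type*} [MeasurableSpace Ω] {P : Measure Ω} [IsProbabilityMeasure P]
  {X : ι → Ω → ℝ}

lemma integral_mul_eq_of_pairwise_indepFun [DecidableEq ι] (hX : ∀ i, MemLp (X i) 2 P)
    (hindep : Pairwise fun i j => X i ⟂ᵢ[P] X j) (i j : ι) :
    ∫ ω, X i ω * X j ω ∂P = P[X i] * P[X j] + if i = j then variance (X i) P else 0 := by
  rcases eq_or_ne i j with rfl | hij
  · rw [if_pos rfl, variance_eq_sub (hX i)]
    simp only [Pi.pow_apply, sq]
    ring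
  · rw [if_neg hij, add_zero]
    exact (hindep hij).integral_mul_eq_mul_integral (hX i).aestronglyMeasurable
      (hX j).aestronglyMeasurable

lemma Matrix.dotProduct_mulVec_self_eq_sum_sum [Fintype ι] (M : Matrix ι ι ℝ) (x : ι → ℝ) :
    x ⬝ᵥ (M *ᵥ x) = ∑ i, ∑ j, M i j * (x i * x j) := by
  simp only [dotProduct, mulVec, Finset.mul_sum]
  exact Finset.sum_congr rfl fun i _ => Finset.sum_congr rfl fun j _ => by ring

theorem integral_dotProduct_mulVec_of_pairwise_indepFun [Fintype ι] [DecidableEq ι]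
    (hX : ∀ i, MemLp (X i) 2 P) (hindep : Pairwise fun i j => X i ⟂ᵢ[P] X j)
    (M : Matrix ι ι ℝ) :
    ∫ ω, (fun i => X i ω) ⬝ᵥ (M *ᵥ fun i => X i ω) ∂P
      = ∑ i, M i i * variance (X i) P + (fun i => P[X i]) ⬝ᵥ (M *ᵥ fun i => P[X i]) := by
  have hint : ∀ i j, Integrable (fun ω => M i j * (X i ω * X j ω)) P := fun i j =>
    ((hX i).integrable_mul (hX j)).const_mul _
  simp_rw [dotProduct_mulVec_self_eq_sum_sum]
  rw [integral_finsetSum _ fun i _ => integrable_finsetSum _ fun j _ => hint i j]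
  simp_rw [integral_finsetSum _ fun j _ => hint _ j, integral_const_mul,
    integral_mul_eq_of_pairwise_indepFun hX hindep, mul_add, Finset.sum_add_distrib,
    mul_ite, mul_zero, Finset.sum_ite_eq, Finset.mem_univ, if_true]
  exact add_comm _ _

end SecondMoments

lemma Matrix.isSymm_mul_inv_mul_transpose {m n α : Type*} [Fintype m] [Fintype n]
    [DecidableEq n] [CommRing α] (Q : Matrix m n α) {A : Matrix n n α} (hA : A.IsSymm) :
    (Q * A⁻¹ * Qᵀ).IsSymm := by
  simp only [IsSymm, transpose_mul, transpose_transpose, transpose_nonsing_inv, hA.eq,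
    Matrix.mul_assoc]

section HC3

variable {n : Type*} [Fintype n] [DecidableEq n]

noncomputable def hc3Matrix (H : Matrix n n ℝ) (w : n → ℝ) : Matrix n n ℝ :=
  diagonal w * (1 - H) * diagonal (fun i => ((1 - H i i) ^ 2)⁻¹) * (1 - H) * diagonal w

lemma hc3Matrix_apply_self {H : Matrix n n ℝ} (hH : H.IsSymm) (hdiag : ∀ i, H i i ≠ 1)
    (w : n → ℝ) (i : n) :
    hc3Matrix H w i i
      = w i ^ 2 * (1 + ∑ j ∈ Finset.univ.filter (· ≠ i), H i j ^ 2 / (1 - H j j) ^ 2) := by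
  have hpivot : (1 - H i i) * (1 - H i i) * ((1 - H i i) ^ 2)⁻¹ = 1 := by
    rw [← sq, mul_inv_cancel₀ (pow_ne_zero 2 (sub_ne_zero.mpr (hdiag i).symm))]
  have hoff : ∀ j ∈ Finset.univ.erase i,
      (1 - H) i j * (((1 - H j j) ^ 2)⁻¹ * ((1 - H) j i * w i))
        = H i j ^ 2 / (1 - H j j) ^ 2 * w i := fun j hj => by
    have hji := Finset.ne_of_mem_erase hj
    rw [Matrix.sub_apply, Matrix.sub_apply, one_apply_ne hji.symm, one_apply_ne hji,
      hH.apply i j]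
    ring
  simp only [hc3Matrix, Matrix.mul_assoc]
  rw [diagonal_mul, Matrix.mul_apply]
  simp only [diagonal_mul, mul_diagonal]
  rw [Finset.filter_ne', ← Finset.add_sum_erase _ _ (Finset.mem_univ i),
    Finset.sum_congr rfl hoff, ← Finset.sum_mul, Matrix.sub_apply, one_apply_eq]
  linear_combination w i ^ 2 * hpivot

lemma sq_le_hc3Matrix_apply_self {H : Matrix n n ℝ} (hH : H.IsSymm) (hdiag : ∀ i, H i i ≠ 1)
    (w : n → ℝ) (i : n) : w i ^ 2 ≤ hc3Matrix H w i i := by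
  rw [hc3Matrix_apply_self hH hdiag]
  exact le_mul_of_one_le_right (sq_nonneg _)
    (le_add_of_nonneg_right (Finset.sum_nonneg fun j _ => by positivity))

lemma hc3Matrix_posSemidef {H : Matrix n n ℝ} (hH : H.IsSymm) (w : n → ℝ) :
    (hc3Matrix H w).PosSemidef := by
  have hfactor : hc3Matrix H w = ((1 - H) * diagonal w)ᴴ
      * diagonal (fun i => ((1 - H i i) ^ 2)⁻¹) * ((1 - H) * diagonal w) := by
    simp only [hc3Matrix, conjTranspose_eq_transpose_of_trivial, transpose_mul, transpose_sub,
      transpose_one, hH.eq, diagonal_transpose, Matrix.mul_assoc]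
  rw [hfactor]
  exact (PosSemidef.diagonal fun i => by positivity).conjTranspose_mul_mul_same _

end HC3

theorem HC3_estimator_conservative_general {B L : ℕ} {Ω : Type*} [MeasurableSpace Ω]
    (P : Measure Ω) [IsProbabilityMeasure P]
    (τhat : Fin B → Ω → ℝ)
    (hind : iIndepFun τhat P)
    (hL2 : ∀ i, MemLp (τhat i) 2 P)
    (τbar v : Fin B → ℝ)
    (hmean : ∀ i, ∫ ω, τhat i ω ∂P = τbar i)
    (hvar : ∀ i, variance (τhat i) P = v i)
    (Q : Matrix (Fin B) (Fin L) ℝ)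
    (H : Matrix (Fin B) (Fin B) ℝ) (hH : H = Q * (Qᵀ * Q)⁻¹ * Qᵀ)
    (hdiag : ∀ i, H i i < 1)
    (Ψ : Matrix (Fin B) (Fin B) ℝ)
    (hΨ : Ψ = Matrix.diagonal fun i => ((1 - H i i) ^ 2)⁻¹)
    (w : Fin B → ℝ) (W : Matrix (Fin B) (Fin B) ℝ) (hW : W = Matrix.diagonal w) :
    (∫ ω, (fun i => τhat i ω) ⬝ᵥ ((W * (1 - H) * Ψ * (1 - H) * W) *ᵥ fun i => τhat i ω) ∂P
        = ∑ i, w i ^ 2 * v i *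
            (1 + ∑ j ∈ Finset.univ.filter (fun j => j ≠ i), (H i j) ^ 2 / (1 - H j j) ^ 2)
          + τbar ⬝ᵥ ((W * (1 - H) * Ψ * (1 - H) * W) *ᵥ τbar)) ∧
      ∑ i, w i ^ 2 * v i
        ≤ ∫ ω, (fun i => τhat i ω) ⬝ᵥ
            ((W * (1 - H) * Ψ * (1 - H) * W) *ᵥ fun i => τhat i ω) ∂P := by
  have hgram : (Qᵀ * Q).IsSymm := by rw [IsSymm, transpose_mul, transpose_transpose]
  have hsymm : H.IsSymm := hH ▸ Q.isSymm_mul_inv_mul_transpose hgram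
  have hdiag_ne : ∀ i, H i i ≠ 1 := fun i => (hdiag i).ne
  have hM : W * (1 - H) * Ψ * (1 - H) * W = hc3Matrix H w := by rw [hΨ, hW]; rfl
  have hmoment := integral_dotProduct_mulVec_of_pairwise_indepFun hL2
    (fun _ _ hij => hind.indepFun hij) (hc3Matrix H w)
  simp only [hmean, hvar] at hmoment
  rw [hM, hmoment]
  refine ⟨?_, ?_⟩
  · congr 1
    exact Finset.sum_congr rfl fun i _ => by rw [hc3Matrix_apply_self hsymm hdiag_ne]; ring
  · calc ∑ i, w i ^ 2 * v i ≤ ∑ i, hc3Matrix H w i i * v i :=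
          Finset.sum_le_sum fun i _ => mul_le_mul_of_nonneg_right
            (sq_le_hc3Matrix_apply_self hsymm hdiag_ne w i) (hvar i ▸ variance_nonneg _ _)
      _ ≤ _ := le_add_of_nonneg_right <| by
          simpa using (hc3Matrix_posSemidef hsymm w).dotProduct_mulVec_nonneg τbar

/-- For independent τ̂_i with means τ̄_i and variances v_i, a fixed full-rank
design Q with hat matrix H (diagonal entries < 1), Ψ = diag(1/(1−h_{ii})²), and W = diag(w),
E[τ̂ᵀW(I−H)Ψ(I−H)Wτ̂] = ∑ w_i²v_i(1 + ∑_{j≠i} h_{ij}²/(1−h_{jj})²) + τ̄ᵀW(I−H)Ψ(I−H)Wτ̄,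
and hence E[B²S²₂(Q)] = E[τ̂ᵀW(I−H)Ψ(I−H)Wτ̂] ≥ ∑ w_i²v_i. -/
theorem HC3_estimator_conservative {B L : ℕ} {Ω : Type*} [MeasurableSpace Ω]
    (P : Measure Ω) [IsProbabilityMeasure P]
    (τhat : Fin B → Ω → ℝ)
    (hind : iIndepFun τhat P)
    (hL2 : ∀ i, MemLp (τhat i) 2 P)
    (τbar v : Fin B → ℝ)
    (hmean : ∀ i, ∫ ω, τhat i ω ∂P = τbar i)
    (hvar : ∀ i, variance (τhat i) P = v i)
    (Q : Matrix (Fin B) (Fin L) ℝ) (hrank : Q.rank = L)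
    (H : Matrix (Fin B) (Fin B) ℝ) (hH : H = Q * (Qᵀ * Q)⁻¹ * Qᵀ)
    (hdiag : ∀ i, H i i < 1)
    (Ψ : Matrix (Fin B) (Fin B) ℝ)
    (hΨ : Ψ = Matrix.diagonal fun i => ((1 - H i i) ^ 2)⁻¹)
    (w : Fin B → ℝ) (W : Matrix (Fin B) (Fin B) ℝ) (hW : W = Matrix.diagonal w) :
    (∫ ω, (fun i => τhat i ω) ⬝ᵥ ((W * (1 - H) * Ψ * (1 - H) * W) *ᵥ fun i => τhat i ω) ∂P
        = ∑ i, w i ^ 2 * v i *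
            (1 + ∑ j ∈ Finset.univ.filter (fun j => j ≠ i), (H i j) ^ 2 / (1 - H j j) ^ 2)
          + τbar ⬝ᵥ ((W * (1 - H) * Ψ * (1 - H) * W) *ᵥ τbar)) ∧
      ∑ i, w i ^ 2 * v i
        ≤ ∫ ω, (fun i => τhat i ω) ⬝ᵥ
            ((W * (1 - H) * Ψ * (1 - H) * W) *ᵥ fun i => τhat i ω) ∂P :=
  HC3_estimator_conservative_general P τhat hind hL2 τbar v hmean hvar Q H hH hdiag Ψ hΨ w W hW
end

section
/- Under homoskedasticity across blocks (Var(τ̂_i) = ν for all i) and equal weights (W = I), the HC2-type estimator S²₃(Q) = B⁻² τ̂ᵀ(I−H_Q)Ψ̃(I−H_Q)τ̂, with Ψ̃ diagonal having entries 1/(1−h_{Qii}), satisfies E[S²₃(Q)] − ν/B = B⁻² f̄ᵀ(I−H_Q)Ψ̃(I−H_Q)f̄ ≥ 0, where f̄ = E[τ̂]. -/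
/-!
For square-integrable, pairwise independent coordinates, `E[τ̂ᵀ M τ̂] = f̄ᵀ M f̄ + ∑ᵢ Mᵢᵢ Var τ̂ᵢ`, so
under homoskedasticity the bias of the quadratic form is `ν · tr M`. With `H` the (symmetric,
idempotent) hat matrix, `I - H` is idempotent too, hence for `M = (I - H) Ψ̃ (I - H)` the trace is
`tr ((I - H) Ψ̃) = ∑ᵢ (1 - hᵢᵢ) / (1 - hᵢᵢ) = B`, and the `ν / B` cancels exactly after scaling by
`B⁻²`. Finally `M = (I - H)ᵀ Ψ̃ (I - H)` with `Ψ̃` a positive diagonal matrix, so `M` is positive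
semidefinite.
-/

open Matrix BigOperators MeasureTheory ProbabilityTheory

namespace Matrix

variable {m n R : Type*} [Fintype m] [Fintype n] [DecidableEq n] [CommRing R]

-- Also for singular `A`, where Mathlib's `A⁻¹` is `0`.
theorem nonsing_inv_mul_mul_nonsing_inv (A : Matrix n n R) : A⁻¹ * A * A⁻¹ = A⁻¹ := by
  by_cases h : IsUnit A.det
  · rw [nonsing_inv_mul A h, Matrix.one_mul]
  · simp [nonsing_inv_apply_not_isUnit A h]

noncomputable def hatMatrix (Q : Matrix m n R) : Matrix m m R := Q * (Qᵀ * Q)⁻¹ * Qᵀ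

theorem isSymm_hatMatrix (Q : Matrix m n R) : (hatMatrix Q).IsSymm := by
  simp [hatMatrix, IsSymm, transpose_mul, transpose_nonsing_inv, Matrix.mul_assoc]

theorem isIdempotentElem_hatMatrix (Q : Matrix m n R) : IsIdempotentElem (hatMatrix Q) :=
  calc hatMatrix Q * hatMatrix Q = Q * ((Qᵀ * Q)⁻¹ * (Qᵀ * Q) * (Qᵀ * Q)⁻¹) * Qᵀ := by
        simp only [hatMatrix, Matrix.mul_assoc]
    _ = hatMatrix Q := by rw [nonsing_inv_mul_mul_nonsing_inv]; rfl

end Matrix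

namespace IsIdempotentElem
variable {n R : Type*} [Fintype n] [DecidableEq n] [CommRing R]

theorem trace_mul_diagonal_mul {E : Matrix n n R} (hE : IsIdempotentElem E) (d : n → R) :
    (E * diagonal d * E).trace = ∑ i, E i i * d i := by
  rw [trace_mul_comm, ← Matrix.mul_assoc, hE.eq]
  simp [trace, mul_diagonal]

theorem trace_mul_diagonal_mul_eq_card {E : Matrix n n R} (hE : IsIdempotentElem E) {d : n → R}
    (hd : ∀ i, E i i * d i = 1) : (E * diagonal d * E).trace = Fintype.card n := by
  simp [hE.trace_mul_diagonal_mul, hd]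

end IsIdempotentElem

theorem Matrix.IsSymm.dotProduct_mulVec_mul_diagonal_mul_nonneg {n R : Type*} [Fintype n]
    [DecidableEq n] [CommRing R] [PartialOrder R] [StarRing R] [StarOrderedRing R] [TrivialStar R]
    {E : Matrix n n R} (hE : E.IsSymm) {d : n → R} (hd : 0 ≤ d) (x : n → R) :
    0 ≤ x ⬝ᵥ ((E * diagonal d * E) *ᵥ x) := by
  have h := (PosSemidef.diagonal hd).conjTranspose_mul_mul_same E
  rw [conjTranspose_eq_transpose_of_trivial, hE.eq] at h
  simpa using h.dotProduct_mulVec_nonneg x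

namespace ProbabilityTheory
variable {ι Ω : Type*} [Fintype ι] [MeasurableSpace Ω] {P : Measure Ω} [IsProbabilityMeasure P]
  {X : ι → Ω → ℝ}

theorem integral_dotProduct_mulVec (hX : ∀ i, MemLp (X i) 2 P) (M : Matrix ι ι ℝ) :
    ∫ ω, (fun i => X i ω) ⬝ᵥ (M *ᵥ fun i => X i ω) ∂P
      = (fun i => P[X i]) ⬝ᵥ (M *ᵥ fun i => P[X i]) + ∑ i, ∑ j, M i j * cov[X i, X j; P] := by
  have hexpand : ∀ x : ι → ℝ, x ⬝ᵥ (M *ᵥ x) = ∑ i, ∑ j, M i j * (x i * x j) := fun x => by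
    simp only [dotProduct, mulVec, Finset.mul_sum]
    exact Finset.sum_congr rfl fun i _ => Finset.sum_congr rfl fun j _ => by ring
  have hint : ∀ i j, Integrable (fun ω => M i j * (X i ω * X j ω)) P := fun i j =>
    ((hX i).integrable_mul (hX j)).const_mul _
  have hprod : ∀ i j, ∫ ω, M i j * (X i ω * X j ω) ∂P
      = M i j * (P[X i] * P[X j]) + M i j * cov[X i, X j; P] := fun i j => by
    rw [integral_const_mul, covariance_eq_sub (hX i) (hX j)]
    simp only [Pi.mul_apply]
    ring
  simp only [hexpand, ← Finset.sum_add_distrib, ← hprod]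
  rw [integral_finsetSum _ fun i _ => integrable_finsetSum _ fun j _ => hint i j]
  exact Finset.sum_congr rfl fun i _ => integral_finsetSum _ fun j _ => hint i j

theorem integral_dotProduct_mulVec_of_pairwise_indepFun
    (hind : Pairwise fun i j => IndepFun (X i) (X j) P) (hX : ∀ i, MemLp (X i) 2 P)
    (M : Matrix ι ι ℝ) :
    ∫ ω, (fun i => X i ω) ⬝ᵥ (M *ᵥ fun i => X i ω) ∂P
      = (fun i => P[X i]) ⬝ᵥ (M *ᵥ fun i => P[X i]) + ∑ i, M i i * Var[X i; P] := by
  rw [integral_dotProduct_mulVec hX]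
  congr 1
  refine Finset.sum_congr rfl fun i _ => ?_
  rw [Finset.sum_eq_single i, covariance_self (hX i).aemeasurable]
  · intro j _ hji
    rw [(hind hji.symm).covariance_eq_zero (hX i) (hX j), mul_zero]
  · simp

end ProbabilityTheory

theorem HC2_estimator_unbiased_homoskedastic_general {B L : ℕ} {Ω : Type*}
    [MeasurableSpace Ω] (P : Measure Ω) [IsProbabilityMeasure P]
    (τhat : Fin B → Ω → ℝ)
    (hind : iIndepFun τhat P)
    (hL2 : ∀ i, MemLp (τhat i) 2 P)
    (fbar : Fin B → ℝ) (hmean : ∀ i, ∫ ω, τhat i ω ∂P = fbar i)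
    (ν : ℝ) (hvar : ∀ i, variance (τhat i) P = ν)
    (Q : Matrix (Fin B) (Fin L) ℝ)
    (H : Matrix (Fin B) (Fin B) ℝ) (hH : H = Q * (Qᵀ * Q)⁻¹ * Qᵀ)
    (hdiag : ∀ i, H i i < 1)
    (Ψt : Matrix (Fin B) (Fin B) ℝ)
    (hΨ : Ψt = Matrix.diagonal fun i => (1 - H i i)⁻¹) :
    (∫ ω, ((B : ℝ) ^ 2)⁻¹ *
          ((fun i => τhat i ω) ⬝ᵥ (((1 - H) * Ψt * (1 - H)) *ᵥ fun i => τhat i ω)) ∂P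
        - ν / B
      = ((B : ℝ) ^ 2)⁻¹ * (fbar ⬝ᵥ (((1 - H) * Ψt * (1 - H)) *ᵥ fbar))) ∧
      0 ≤ ((B : ℝ) ^ 2)⁻¹ * (fbar ⬝ᵥ (((1 - H) * Ψt * (1 - H)) *ᵥ fbar)) := by
  have hgap : ∀ i, 0 < 1 - H i i := fun i => sub_pos.mpr (hdiag i)
  replace hH : H = hatMatrix Q := hH
  have hidem : IsIdempotentElem (1 - H) := (hH ▸ isIdempotentElem_hatMatrix Q).one_sub
  have hsymm : (1 - H).IsSymm := by
    rw [IsSymm, transpose_sub, transpose_one, hH, (isSymm_hatMatrix Q).eq]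
  have htrace : ((1 - H) * Ψt * (1 - H)).trace = B := by
    rw [hΨ, hidem.trace_mul_diagonal_mul_eq_card fun i => ?_, Fintype.card_fin]
    simpa using mul_inv_cancel₀ (hgap i).ne'
  have hmeanVec : (fun i => P[τhat i]) = fbar := funext hmean
  constructor
  · rw [integral_const_mul, integral_dotProduct_mulVec_of_pairwise_indepFun
      (fun i j hij => hind.indepFun hij) hL2, hmeanVec]
    simp only [hvar, ← Finset.sum_mul]
    rw [show ∑ i, ((1 - H) * Ψt * (1 - H)) i i = ((1 - H) * Ψt * (1 - H)).trace from rfl, htrace,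
      mul_add, sq, div_eq_mul_inv, ← div_self_mul_self' (B : ℝ)]
    ring
  · rw [hΨ]
    exact mul_nonneg (by positivity) <| hsymm.dotProduct_mulVec_mul_diagonal_mul_nonneg
      (fun i => (inv_pos.mpr (hgap i)).le) fbar

/-- Under homoskedasticity (Var(τ̂_i) = ν for all i) and equal weights,
the HC2-type estimator S²₃(Q) = B⁻²τ̂ᵀ(I−H)Ψ̃(I−H)τ̂ with Ψ̃ = diag(1/(1−h_{ii}))
satisfies E[S²₃(Q)] − ν/B = B⁻² f̄ᵀ(I−H)Ψ̃(I−H)f̄ ≥ 0, where f̄ = E[τ̂]. -/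
theorem HC2_estimator_unbiased_homoskedastic {B L : ℕ} (hB : 0 < B) {Ω : Type*}
    [MeasurableSpace Ω] (P : Measure Ω) [IsProbabilityMeasure P]
    (τhat : Fin B → Ω → ℝ)
    (hind : iIndepFun τhat P)
    (hL2 : ∀ i, MemLp (τhat i) 2 P)
    (fbar : Fin B → ℝ) (hmean : ∀ i, ∫ ω, τhat i ω ∂P = fbar i)
    (ν : ℝ) (hvar : ∀ i, variance (τhat i) P = ν)
    (Q : Matrix (Fin B) (Fin L) ℝ) (hrank : Q.rank = L)
    (H : Matrix (Fin B) (Fin B) ℝ) (hH : H = Q * (Qᵀ * Q)⁻¹ * Qᵀ)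
    (hdiag : ∀ i, H i i < 1)
    (Ψt : Matrix (Fin B) (Fin B) ℝ)
    (hΨ : Ψt = Matrix.diagonal fun i => (1 - H i i)⁻¹) :
    (∫ ω, ((B : ℝ) ^ 2)⁻¹ *
          ((fun i => τhat i ω) ⬝ᵥ (((1 - H) * Ψt * (1 - H)) *ᵥ fun i => τhat i ω)) ∂P
        - ν / B
      = ((B : ℝ) ^ 2)⁻¹ * (fbar ⬝ᵥ (((1 - H) * Ψt * (1 - H)) *ᵥ fbar))) ∧
      0 ≤ ((B : ℝ) ^ 2)⁻¹ * (fbar ⬝ᵥ (((1 - H) * Ψt * (1 - H)) *ᵥ fbar)) :=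
  HC2_estimator_unbiased_homoskedastic_general P τhat hind hL2 fbar hmean ν hvar Q H hH hdiag Ψt hΨ
end
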